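/- Let n₁ > 2 and n₂ > 2. In the multivariate polynomial ring R = ℚ[a₂, …, a_{n₁}, b₂, …, b_{n₂}], define for each k with 2 ≤ k ≤ n₁ + n₂ the element r_k = Σ_{i+j=k} a_i b_j, where by convention a₀ = b₀ = 1, a₁ = b₁ = 0, a_i = 0 for i > n₁, and b_j = 0 for j > n₂. Then the element a₃ does not belong to the ideal of R generated by r₂, …, r_{n₁+n₂}. -/

import Mathlib

open MvPolynomial

/-- The variables `a₂, …, a_{n₁}` of `R = ℚ[a₂, …, a_{n₁}, b₂, …, b_{n₂}]`, with the
conventions `a₀ = 1`, `a₁ = 0` and `a_i = 0` for `i > n₁`. -/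
noncomputable def aVar (n₁ n₂ : ℕ) (i : ℕ) : MvPolynomial (Fin (n₁ - 1) ⊕ Fin (n₂ - 1)) ℚ :=
  if i = 0 then 1 else if i = 1 then 0
    else if h : i - 2 < n₁ - 1 then X (Sum.inl ⟨i - 2, h⟩) else 0

/-- The variables `b₂, …, b_{n₂}` of `R = ℚ[a₂, …, a_{n₁}, b₂, …, b_{n₂}]`, with the
conventions `b₀ = 1`, `b₁ = 0` and `b_j = 0` for `j > n₂`. -/
noncomputable def bVar (n₁ n₂ : ℕ) (j : ℕ) : MvPolynomial (Fin (n₁ - 1) ⊕ Fin (n₂ - 1)) ℚ :=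
  if j = 0 then 1 else if j = 1 then 0
    else if h : j - 2 < n₂ - 1 then X (Sum.inr ⟨j - 2, h⟩) else 0

/-- `r_k = Σ_{i+j=k} a_i b_j`, with the conventions `a₀ = b₀ = 1`, `a₁ = b₁ = 0`,
`a_i = 0` for `i > n₁` and `b_j = 0` for `j > n₂`. -/
noncomputable def rPoly (n₁ n₂ : ℕ) (k : ℕ) :
    MvPolynomial (Fin (n₁ - 1) ⊕ Fin (n₂ - 1)) ℚ :=
  ∑ p ∈ Finset.HasAntidiagonal.antidiagonal k, aVar n₁ n₂ p.1 * bVar n₁ n₂ p.2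

/-!
`r_k` is the degree-`k` coefficient of the product of the generating series `Σ aᵢ tⁱ` and
`Σ bⱼ tʲ`. Over the dual numbers `ℚ[ε]`, the point `a₃ = ε`, `b₃ = -ε` (all other variables `0`)
turns these series into `1 + ε t³` and `1 - ε t³`, whose product is `1` because `ε² = 0`. So
every `r_k` with `k ≥ 1` vanishes at this point while `a₃` does not.
-/

namespace Polynomial

theorem coeff_one_add_C_mul_X_pow {A : Type*} [Semiring A] (c : A) {n : ℕ} (hn : n ≠ 0)
    (i : ℕ) : (1 + C c * X ^ n).coeff i = if i = 0 then 1 else if i = n then c else 0 := by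
  simp only [coeff_add, coeff_one, coeff_C_mul_X_pow]
  split_ifs <;> simp_all

theorem one_add_C_mul_X_pow_mul_one_add_C_neg_mul_X_pow {A : Type*} [CommRing A] {c : A}
    (hc : c * c = 0) (n : ℕ) : (1 + C c * X ^ n) * (1 + C (-c) * X ^ n) = 1 := by
  have : (1 + C c * X ^ n) * (1 + C (-c) * X ^ n) = 1 - C (c * c) * X ^ (2 * n) := by
    rw [C_neg, C_mul]; ring
  rw [this, hc, C_0, zero_mul, sub_zero]

end Polynomial

theorem DualNumber.eps_ne_zero {R : Type*} [Semiring R] [Nontrivial R] :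
    (DualNumber.eps : DualNumber R) ≠ 0 := fun h => by
  simpa using congrArg TrivSqZeroExt.snd h

section

variable {n₁ n₂ : ℕ} {A : Type*} [CommRing A]

theorem map_rPoly_eq_coeff_mul {H : Type*}
    [FunLike H (MvPolynomial (Fin (n₁ - 1) ⊕ Fin (n₂ - 1)) ℚ) A]
    [RingHomClass H (MvPolynomial (Fin (n₁ - 1) ⊕ Fin (n₂ - 1)) ℚ) A] (φ : H)
    {F G : Polynomial A} (hF : ∀ i, φ (aVar n₁ n₂ i) = F.coeff i)
    (hG : ∀ j, φ (bVar n₁ n₂ j) = G.coeff j) (k : ℕ) :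
    φ (rPoly n₁ n₂ k) = (F * G).coeff k := by
  simp only [rPoly, map_sum, map_mul, hF, hG, Polynomial.coeff_mul]

variable (n₁ n₂) in
/-- The point `a₃ = c`, `b₃ = d`, all other variables `0` (index `1` of `Fin (n₁ - 1)` is `a₃`). -/
def a3b3Point (c d : A) : Fin (n₁ - 1) ⊕ Fin (n₂ - 1) → A :=
  Sum.elim (fun i => if (i : ℕ) = 1 then c else 0) (fun j => if (j : ℕ) = 1 then d else 0)

variable [Algebra ℚ A]

theorem aeval_a3b3Point_aVar (h₁ : 2 < n₁) (c d : A) (i : ℕ) :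
    aeval (a3b3Point n₁ n₂ c d) (aVar n₁ n₂ i) =
      (1 + Polynomial.C c * Polynomial.X ^ 3).coeff i := by
  rw [Polynomial.coeff_one_add_C_mul_X_pow c three_ne_zero]
  unfold aVar
  split_ifs <;> simp_all [a3b3Point] <;> omega

theorem aeval_a3b3Point_bVar (h₂ : 2 < n₂) (c d : A) (j : ℕ) :
    aeval (a3b3Point n₁ n₂ c d) (bVar n₁ n₂ j) =
      (1 + Polynomial.C d * Polynomial.X ^ 3).coeff j := by
  rw [Polynomial.coeff_one_add_C_mul_X_pow d three_ne_zero]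
  unfold bVar
  split_ifs <;> simp_all [a3b3Point] <;> omega

end

/-- For `n₁ > 2` and `n₂ > 2`, in `R = ℚ[a₂, …, a_{n₁}, b₂, …, b_{n₂}]`,
the element `a₃` does not belong to the ideal generated by `r₂, …, r_{n₁+n₂}`, where
`r_k = Σ_{i+j=k} a_i b_j` (with `a₀ = b₀ = 1`, `a₁ = b₁ = 0`, `a_i = 0` for `i > n₁`,
`b_j = 0` for `j > n₂`). -/
theorem a3_not_mem_span_whitney (n₁ n₂ : ℕ) (h₁ : 2 < n₁) (h₂ : 2 < n₂) :
    aVar n₁ n₂ 3 ∉ Ideal.span ((fun k => rPoly n₁ n₂ k) '' Set.Icc 2 (n₁ + n₂)) := by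
  set ε : DualNumber ℚ := DualNumber.eps
  set φ := aeval (R := ℚ) (a3b3Point n₁ n₂ ε (-ε))
  have hr : ∀ k, 1 ≤ k → φ (rPoly n₁ n₂ k) = 0 := fun k hk => by
    rw [map_rPoly_eq_coeff_mul φ (aeval_a3b3Point_aVar h₁ _ _) (aeval_a3b3Point_bVar h₂ _ _),
      Polynomial.one_add_C_mul_X_pow_mul_one_add_C_neg_mul_X_pow DualNumber.eps_mul_eps,
      Polynomial.coeff_one, if_neg (by omega)]
  have hspan : Ideal.span ((fun k => rPoly n₁ n₂ k) '' Set.Icc 2 (n₁ + n₂)) ≤ RingHom.ker φ :=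
    Ideal.span_le.mpr fun _ ⟨k, hk, hrk⟩ => hrk ▸ hr k (one_le_two.trans hk.1)
  intro hmem
  have ha3 : φ (aVar n₁ n₂ 3) = 0 := hspan hmem
  rw [aeval_a3b3Point_aVar h₁, Polynomial.coeff_one_add_C_mul_X_pow _ three_ne_zero] at ha3
  exact DualNumber.eps_ne_zero ha3
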